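/- Decomposition for the finite-battery two-way channel with α_1, α_2 ∈ [0,1]: the supremum of the sum-throughput over all hard-feasible policies equals the supremum of Σ_{i=1}^{N} R(π_{1,i}, π_{2,i}) over all pairs of sequences (π_{k,i}, ε_{k,i}) with π_{k,i} ≥ 0 and ε_{k,i} ≥ 0 satisfying 0 ≤ Σ_{n=1}^{i} (E_{k,n} + α_j ε_{j,n} − ε_{k,n} − π_{k,n}) ≤ E_k^max for k = 1,2, j ≠ k, and all i = 1,…,N, where R is the per-slot sum-rate function. -/

import Mathlib

/-!
A policy `(p, d)` is the allocation `(π, ε) = (p, d)` with zero split `δ = 0`, and an allocation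
`(π, ε)` together with a split `δ_k ∈ [0, π_k]` is the policy `p_k = π_k - δ_k + α_j δ_j`,
`d_k = δ_k + ε_k`, which has exactly the same battery levels. The supremum defining `R(π_1, π_2)`
is that of a continuous function on the compact box `[0, π_1] × [0, π_2]`, so it is attained by
some split. Hence every throughput on one side is dominated by one on the other, and the two
suprema agree.
-/

/-- The per-slot sum-rate of the two-way channel with energy cooperation. -/
noncomputable def perSlotRate (h1 h2 s1 s2 a1 a2 : ℝ) (π1 π2 : ℝ) : ℝ :=
  sSup {r : ℝ | ∃ d1 d2 : ℝ, 0 ≤ d1 ∧ d1 ≤ π1 ∧ 0 ≤ d2 ∧ d2 ≤ π2 ∧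
    r = 1/2 * Real.log (1 + h1 * (π1 - d1 + a2 * d2) / s2)
      + 1/2 * Real.log (1 + h2 * (π2 - d2 + a1 * d1) / s1)}

open Set

noncomputable def twoWayRate (h1 h2 s1 s2 x1 x2 : ℝ) : ℝ :=
  1/2 * Real.log (1 + h1 * x1 / s2) + 1/2 * Real.log (1 + h2 * x2 / s1)

section PerSlotRate

variable {h1 h2 s1 s2 a1 a2 π1 π2 : ℝ}

theorem perSlotRate_eq_sSup_image :
    perSlotRate h1 h2 s1 s2 a1 a2 π1 π2 = sSup ((fun d : ℝ × ℝ =>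
      twoWayRate h1 h2 s1 s2 (π1 - d.1 + a2 * d.2) (π2 - d.2 + a1 * d.1)) ''
        Icc 0 π1 ×ˢ Icc 0 π2) := by
  unfold perSlotRate twoWayRate
  congr 1
  ext r
  simp only [mem_ofPred_eq, mem_image, mem_prod, mem_Icc, Prod.exists]
  constructor
  · rintro ⟨d1, d2, hd1, hd1π, hd2, hd2π, rfl⟩
    exact ⟨d1, d2, ⟨⟨hd1, hd1π⟩, hd2, hd2π⟩, rfl⟩
  · rintro ⟨d1, d2, ⟨⟨hd1, hd1π⟩, hd2, hd2π⟩, rfl⟩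
    exact ⟨d1, d2, hd1, hd1π, hd2, hd2π, rfl⟩

theorem continuousOn_twoWayRate_split (hh1 : 0 < h1) (hh2 : 0 < h2) (hs1 : 0 < s1)
    (hs2 : 0 < s2) (ha1 : 0 ≤ a1) (ha2 : 0 ≤ a2) :
    ContinuousOn (fun d : ℝ × ℝ =>
      twoWayRate h1 h2 s1 s2 (π1 - d.1 + a2 * d.2) (π2 - d.2 + a1 * d.1))
        (Icc 0 π1 ×ˢ Icc 0 π2) := by
  rintro ⟨d1, d2⟩ ⟨⟨hd1, hd1π⟩, hd2, hd2π⟩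
  have : 0 ≤ π1 - d1 + a2 * d2 := by nlinarith
  have : 0 ≤ π2 - d2 + a1 * d1 := by nlinarith
  apply ContinuousAt.continuousWithinAt
  unfold twoWayRate
  fun_prop (disch := positivity)

theorem isGreatest_perSlotRate (hh1 : 0 < h1) (hh2 : 0 < h2) (hs1 : 0 < s1) (hs2 : 0 < s2)
    (ha1 : 0 ≤ a1) (ha2 : 0 ≤ a2) (hπ1 : 0 ≤ π1) (hπ2 : 0 ≤ π2) :
    IsGreatest ((fun d : ℝ × ℝ =>
      twoWayRate h1 h2 s1 s2 (π1 - d.1 + a2 * d.2) (π2 - d.2 + a1 * d.1)) ''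
        Icc 0 π1 ×ˢ Icc 0 π2) (perSlotRate h1 h2 s1 s2 a1 a2 π1 π2) := by
  rw [perSlotRate_eq_sSup_image]
  exact ((isCompact_Icc.prod isCompact_Icc).image_of_continuousOn
    (continuousOn_twoWayRate_split hh1 hh2 hs1 hs2 ha1 ha2)).isGreatest_sSup
      (((nonempty_Icc.2 hπ1).prod (nonempty_Icc.2 hπ2)).image _)

theorem twoWayRate_le_perSlotRate (hh1 : 0 < h1) (hh2 : 0 < h2) (hs1 : 0 < s1) (hs2 : 0 < s2)
    (ha1 : 0 ≤ a1) (ha2 : 0 ≤ a2) (hπ1 : 0 ≤ π1) (hπ2 : 0 ≤ π2) :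
    twoWayRate h1 h2 s1 s2 π1 π2 ≤ perSlotRate h1 h2 s1 s2 a1 a2 π1 π2 :=
  (isGreatest_perSlotRate hh1 hh2 hs1 hs2 ha1 ha2 hπ1 hπ2).2
    ⟨0, ⟨⟨le_rfl, hπ1⟩, le_rfl, hπ2⟩, by simp⟩

end PerSlotRate

theorem stmt_15_general
    (N : ℕ) (E1 E2 : ℕ → ℝ) (Em1 Em2 h1 h2 s1 s2 a1 a2 : ℝ)
    (hh1 : 0 < h1) (hh2 : 0 < h2) (hs1 : 0 < s1) (hs2 : 0 < s2)
    (ha1 : a1 ∈ Set.Icc (0:ℝ) 1) (ha2 : a2 ∈ Set.Icc (0:ℝ) 1) :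
    sSup {t : ℝ | ∃ p1 p2 d1 d2 : ℕ → ℝ,
        (∀ i < N, 0 ≤ p1 i ∧ 0 ≤ p2 i ∧ 0 ≤ d1 i ∧ 0 ≤ d2 i) ∧
        (∀ i < N,
          (0 ≤ ∑ n ∈ Finset.range (i+1), (E1 n - p1 n + a2 * d2 n - d1 n) ∧
            ∑ n ∈ Finset.range (i+1), (E1 n - p1 n + a2 * d2 n - d1 n) ≤ Em1) ∧
          (0 ≤ ∑ n ∈ Finset.range (i+1), (E2 n - p2 n + a1 * d1 n - d2 n) ∧
            ∑ n ∈ Finset.range (i+1), (E2 n - p2 n + a1 * d1 n - d2 n) ≤ Em2)) ∧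
        t = ∑ i ∈ Finset.range N,
          (1/2 * Real.log (1 + h1 * p1 i / s2)
            + 1/2 * Real.log (1 + h2 * p2 i / s1))}
    = sSup {t : ℝ | ∃ π1 π2 e1 e2 : ℕ → ℝ,
        (∀ i < N, 0 ≤ π1 i ∧ 0 ≤ π2 i ∧ 0 ≤ e1 i ∧ 0 ≤ e2 i) ∧
        (∀ i < N,
          (0 ≤ ∑ n ∈ Finset.range (i+1), (E1 n + a2 * e2 n - e1 n - π1 n) ∧
            ∑ n ∈ Finset.range (i+1), (E1 n + a2 * e2 n - e1 n - π1 n) ≤ Em1) ∧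
          (0 ≤ ∑ n ∈ Finset.range (i+1), (E2 n + a1 * e1 n - e2 n - π2 n) ∧
            ∑ n ∈ Finset.range (i+1), (E2 n + a1 * e1 n - e2 n - π2 n) ≤ Em2)) ∧
        t = ∑ i ∈ Finset.range N, perSlotRate h1 h2 s1 s2 a1 a2 (π1 i) (π2 i)} := by
  refine csSup_eq_csSup_of_forall_exists_le ?_ ?_
  · rintro _ ⟨p1, p2, d1, d2, hnn, hbat, rfl⟩
    refine ⟨_, ⟨p1, p2, d1, d2, hnn, fun i hi => ?_, rfl⟩, Finset.sum_le_sum fun i hi => ?_⟩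
    · convert hbat i hi using 4 <;> ring
    · obtain ⟨hp1, hp2, -⟩ := hnn i (Finset.mem_range.1 hi)
      exact twoWayRate_le_perSlotRate hh1 hh2 hs1 hs2 ha1.1 ha2.1 hp1 hp2
  · rintro _ ⟨π1, π2, e1, e2, hnn, hbat, rfl⟩
    -- an optimal split for every slot, arbitrary beyond the horizon so that `choose` applies
    have hsplit (i : ℕ) : ∃ d : ℝ × ℝ, i < N → d ∈ Icc 0 (π1 i) ×ˢ Icc 0 (π2 i) ∧
        twoWayRate h1 h2 s1 s2 (π1 i - d.1 + a2 * d.2) (π2 i - d.2 + a1 * d.1) =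
          perSlotRate h1 h2 s1 s2 a1 a2 (π1 i) (π2 i) :=
      if hi : i < N then
        (isGreatest_perSlotRate hh1 hh2 hs1 hs2 ha1.1 ha2.1 (hnn i hi).1 (hnn i hi).2.1).1.imp
          fun _ h _ => h
      else ⟨0, (absurd · hi)⟩
    choose δ hδ using hsplit
    refine ⟨_, ⟨fun i => π1 i - (δ i).1 + a2 * (δ i).2, fun i => π2 i - (δ i).2 + a1 * (δ i).1,
      fun i => (δ i).1 + e1 i, fun i => (δ i).2 + e2 i, fun i hi => ?_, fun i hi => ?_, rfl⟩,
      (Finset.sum_congr rfl fun i hi => (hδ i (Finset.mem_range.1 hi)).2).ge⟩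
    · obtain ⟨⟨⟨hδ1, hδ1π⟩, hδ2, hδ2π⟩, -⟩ := hδ i hi
      obtain ⟨-, -, he1, he2⟩ := hnn i hi
      refine ⟨?_, ?_, ?_, ?_⟩ <;> nlinarith [ha1.1, ha2.1]
    · convert hbat i hi using 4 <;> ring

/-- Decomposition for the finite-battery two-way channel: the
optimal sum-throughput over all hard-feasible policies equals the optimum of
the consumed-power / excess-transfer allocation problem with per-slot rates. -/
theorem stmt_15
    (N : ℕ) (E1 E2 : ℕ → ℝ) (Em1 Em2 h1 h2 s1 s2 a1 a2 : ℝ)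
    (hEm1 : 0 < Em1) (hEm2 : 0 < Em2)
    (hh1 : 0 < h1) (hh2 : 0 < h2) (hs1 : 0 < s1) (hs2 : 0 < s2)
    (ha1 : a1 ∈ Set.Icc (0:ℝ) 1) (ha2 : a2 ∈ Set.Icc (0:ℝ) 1)
    (hE : ∀ i < N, 0 ≤ E1 i ∧ 0 ≤ E2 i) :
    sSup {t : ℝ | ∃ p1 p2 d1 d2 : ℕ → ℝ,
        (∀ i < N, 0 ≤ p1 i ∧ 0 ≤ p2 i ∧ 0 ≤ d1 i ∧ 0 ≤ d2 i) ∧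
        (∀ i < N,
          (0 ≤ ∑ n ∈ Finset.range (i+1), (E1 n - p1 n + a2 * d2 n - d1 n) ∧
            ∑ n ∈ Finset.range (i+1), (E1 n - p1 n + a2 * d2 n - d1 n) ≤ Em1) ∧
          (0 ≤ ∑ n ∈ Finset.range (i+1), (E2 n - p2 n + a1 * d1 n - d2 n) ∧
            ∑ n ∈ Finset.range (i+1), (E2 n - p2 n + a1 * d1 n - d2 n) ≤ Em2)) ∧
        t = ∑ i ∈ Finset.range N,
          (1/2 * Real.log (1 + h1 * p1 i / s2)
            + 1/2 * Real.log (1 + h2 * p2 i / s1))}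
    = sSup {t : ℝ | ∃ π1 π2 e1 e2 : ℕ → ℝ,
        (∀ i < N, 0 ≤ π1 i ∧ 0 ≤ π2 i ∧ 0 ≤ e1 i ∧ 0 ≤ e2 i) ∧
        (∀ i < N,
          (0 ≤ ∑ n ∈ Finset.range (i+1), (E1 n + a2 * e2 n - e1 n - π1 n) ∧
            ∑ n ∈ Finset.range (i+1), (E1 n + a2 * e2 n - e1 n - π1 n) ≤ Em1) ∧
          (0 ≤ ∑ n ∈ Finset.range (i+1), (E2 n + a1 * e1 n - e2 n - π2 n) ∧
            ∑ n ∈ Finset.range (i+1), (E2 n + a1 * e1 n - e2 n - π2 n) ≤ Em2)) ∧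
        t = ∑ i ∈ Finset.range N, perSlotRate h1 h2 s1 s2 a1 a2 (π1 i) (π2 i)} :=
  stmt_15_general N E1 E2 Em1 Em2 h1 h2 s1 s2 a1 a2 hh1 hh2 hs1 hs2 ha1 ha2
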